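/- For every squarefree positive integer d, v(d) ≤ d⁴ ∏_{p | d} (1 + 1/p) (product over the primes dividing d); consequently there is a constant C > 0 such that v(d) ≤ C d⁴ log log d for all squarefree d ≥ 3. -/

import Mathlib

/-- `v(d)`: number of solutions of `x² + y² + z² ≡ 0 (mod d²)`. -/
noncomputable def vcount (d : ℕ) : ℕ :=
  Nat.card {t : ZMod (d^2) × ZMod (d^2) × ZMod (d^2) // t.1^2 + t.2.1^2 + t.2.2^2 = 0}

open Finset Nat

def solSet (R : Type*) [CommRing R] := {t : R × R × R // t.1^2 + t.2.1^2 + t.2.2^2 = 0}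

def solEquivOfRingEquiv {R S : Type*} [CommRing R] [CommRing S] (e : R ≃+* S) :
    solSet R ≃ solSet S where
  toFun t := ⟨(e t.1.1, e t.1.2.1, e t.1.2.2), by
    have := t.2
    simp only [← map_pow, ← map_add, this, map_zero]⟩
  invFun t := ⟨(e.symm t.1.1, e.symm t.1.2.1, e.symm t.1.2.2), by
    have := t.2
    simp only [← map_pow, ← map_add, this, map_zero]⟩
  left_inv t := by
    apply Subtype.ext
    show (_, _, _) = _
    simp
  right_inv t := by
    apply Subtype.ext
    show (_, _, _) = _
    simp

def solEquivProd {S T : Type*} [CommRing S] [CommRing T] :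
    solSet (S × T) ≃ solSet S × solSet T where
  toFun t := ⟨⟨(t.1.1.1, t.1.2.1.1, t.1.2.2.1), by
      have := congrArg Prod.fst t.2; simpa using this⟩,
    ⟨(t.1.1.2, t.1.2.1.2, t.1.2.2.2), by
      have := congrArg Prod.snd t.2; simpa using this⟩⟩
  invFun t := ⟨((t.1.1.1, t.2.1.1), (t.1.1.2.1, t.2.1.2.1), (t.1.1.2.2, t.2.1.2.2)), by
      have h1 := t.1.2; have h2 := t.2.2
      refine Prod.ext ?_ ?_ <;>
        simp only [Prod.fst_add, Prod.snd_add, Prod.pow_fst, Prod.pow_snd, Prod.fst_zero,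
          Prod.snd_zero]
      · exact h1
      · exact h2⟩
  left_inv t := by apply Subtype.ext; rfl
  right_inv t := by
    apply Prod.ext <;> apply Subtype.ext <;> rfl

lemma vcount_eq (d : ℕ) : vcount d = Nat.card (solSet (ZMod (d^2))) := rfl

lemma vcount_mul {m n : ℕ} (h : m.Coprime n) : vcount (m * n) = vcount m * vcount n := by
  have h2 : (m^2).Coprime (n^2) := Nat.Coprime.pow 2 2 h
  have e0 : ZMod ((m*n)^2) ≃+* ZMod (m^2 * n^2) :=
    ZMod.ringEquivCongr (by ring)
  have e : ZMod ((m*n)^2) ≃+* ZMod (m^2) × ZMod (n^2) :=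
    e0.trans (ZMod.chineseRemainder h2)
  rw [vcount_eq, vcount_eq, vcount_eq,
    Nat.card_congr ((solEquivOfRingEquiv e).trans solEquivProd), Nat.card_prod]

lemma vcount_one : vcount 1 = 1 := by
  rw [vcount_eq]
  have hs : Subsingleton (ZMod (1^2) × ZMod (1^2) × ZMod (1^2)) :=
    inferInstanceAs (Subsingleton (ZMod 1 × ZMod 1 × ZMod 1))
  have h1 : Subsingleton (solSet (ZMod (1^2))) :=
    ⟨fun a b => Subtype.ext (Subsingleton.elim _ _)⟩
  have h2 : Nonempty (solSet (ZMod (1^2))) := ⟨⟨(0,0,0), by norm_num⟩⟩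
  exact Nat.card_eq_one_iff_unique.mpr ⟨h1, h2⟩

lemma vcount_prod {s : Finset ℕ} (h : ∀ p ∈ s, p.Prime) :
    vcount (∏ p ∈ s, p) = ∏ p ∈ s, vcount p := by
  classical
  induction s using Finset.induction with
  | empty => simpa using vcount_one
  | @insert q s' hq ih =>
    rw [Finset.prod_insert hq, Finset.prod_insert hq,
      vcount_mul (Nat.Coprime.prod_right fun p hp =>
        (Nat.coprime_primes (h q (Finset.mem_insert_self q s'))
          (h p (Finset.mem_insert_of_mem hp))).mpr (by rintro rfl; exact hq hp)),
      ih (fun p hp => h p (Finset.mem_insert_of_mem hp))]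


variable {p : ℕ} [Fact p.Prime]

abbrev rho (p : ℕ) [Fact p.Prime] : ZMod (p^2) →+* ZMod p :=
  ZMod.castHom (dvd_pow_self p two_ne_zero) (ZMod p)

lemma rho_natCast (k : ℕ) : rho p (k : ZMod (p^2)) = (k : ZMod p) := map_natCast _ k

lemma rho_apply (x : ZMod (p^2)) : rho p x = (x.val : ZMod p) := by
  have : NeZero (p^2) := ⟨pow_ne_zero 2 (Fact.out : p.Prime).ne_zero⟩
  rw [ZMod.castHom_apply, ← ZMod.natCast_val]

def fiberEquiv (a : ZMod p) : ZMod p ≃ {x : ZMod (p^2) // rho p x = a} where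
  toFun t := ⟨((a.val + p * t.val : ℕ) : ZMod (p^2)), by
    rw [rho_natCast, Nat.cast_add, Nat.cast_mul, ZMod.natCast_self, zero_mul, add_zero,
      ZMod.natCast_val, ZMod.cast_id]⟩
  invFun x := ((x.1.val / p : ℕ) : ZMod p)
  left_inv t := by
    have hp := (Fact.out : p.Prime).pos
    have hlt : a.val + p * t.val < p^2 := by
      have h1 : a.val < p := a.val_lt
      have h2 : t.val < p := t.val_lt
      nlinarith
    show ((((a.val + p * t.val : ℕ) : ZMod (p^2)).val / p : ℕ) : ZMod p) = t
    rw [ZMod.val_natCast_of_lt hlt, Nat.add_mul_div_left _ _ hp, Nat.div_eq_of_lt a.val_lt,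
      zero_add, ZMod.natCast_val, ZMod.cast_id]
  right_inv x := by
    have hp := (Fact.out : p.Prime).pos
    have hx : x.1.val < p^2 := x.1.val_lt
    have hdiv : x.1.val / p < p := Nat.div_lt_of_lt_mul (by rw [← sq]; exact hx)
    apply Subtype.ext
    show ((a.val + p * (((x.1.val / p : ℕ) : ZMod p)).val : ℕ) : ZMod (p^2)) = x.1
    have hv : (rho p x.1).val = a.val := by rw [x.2]
    have hval : (rho p x.1).val = x.1.val % p := by
      rw [rho_apply, ZMod.val_natCast]
    rw [ZMod.val_natCast_of_lt hdiv]
    have h2 : (a.val + p * (x.1.val / p)) = x.1.val := by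
      rw [← hv, hval, Nat.mod_add_div]
    rw [h2, ZMod.natCast_val, ZMod.cast_id]

lemma card_fiber (a : ZMod p) :
    (univ.filter fun x : ZMod (p^2) => rho p x = a).card = p := by
  classical
  rw [← Fintype.card_subtype, Fintype.card_congr (fiberEquiv a).symm, ZMod.card]


section CharSum
variable {F : Type*} [Field F] [Fintype F] [DecidableEq F] (hF : ringChar F ≠ 2)

local notation "χ" => quadraticChar F

include hF in
lemma card_sqrts (a : F) :
    ((univ.filter fun x : F => x^2 = a).card : ℤ) = χ a + 1 := by
  have := quadraticChar_card_sqrts hF a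
  rwa [Set.toFinset_setOf] at this

include hF in
lemma sum_sub_eq_zero (u : F) : ∑ b : F, χ (u - b) = 0 := by
  rw [← quadraticChar_sum_zero hF]
  exact Fintype.sum_equiv (Equiv.subLeft u) _ _ (fun b => rfl)

lemma chi_mul_eq (u b : F) (hb : b ≠ 0) : χ b * χ (u - b) = χ (u * b⁻¹ - 1) := by
  rw [← map_mul]
  have h : b * (u - b) = b^2 * (u * b⁻¹ - 1) := by
    field_simp
  rw [h, map_mul, map_pow, quadraticChar_sq_one hb, one_mul]

include hF in
lemma sum_chi_mul_ne (u : F) (hu : u ≠ 0) :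
    ∑ b ∈ univ.filter (· ≠ (0:F)), χ (u * b⁻¹ - 1) = -(χ (-1)) := by
  classical
  have key : ∑ b ∈ univ.filter (· ≠ (0:F)), χ (u * b⁻¹ - 1)
      = ∑ c ∈ univ.filter (· ≠ (-1:F)), χ c := by
    apply Finset.sum_nbij' (i := fun b => u * b⁻¹ - 1) (j := fun c => u * (c + 1)⁻¹)
    · intro b hb
      simp only [mem_filter, mem_univ, true_and] at hb ⊢
      intro h
      apply hu
      have : u * b⁻¹ = 0 := by linear_combination h
      rcases mul_eq_zero.mp this with h' | h'
      · exact h'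
      · exact absurd (inv_eq_zero.mp h') hb
    · intro c hc
      simp only [mem_filter, mem_univ, true_and] at hc ⊢
      intro h
      have hc1 : c + 1 ≠ 0 := fun h0 => hc (by linear_combination h0)
      rcases mul_eq_zero.mp h with h' | h'
      · exact hu h'
      · exact hc1 (inv_eq_zero.mp h')
    · intro b hb
      simp only [mem_filter, mem_univ, true_and] at hb
      have : u * b⁻¹ - 1 + 1 = u * b⁻¹ := by ring
      rw [this, mul_inv, inv_inv, ← mul_assoc, mul_inv_cancel₀ hu, one_mul]
    · intro c hc
      simp only [mem_filter, mem_univ, true_and] at hc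
      have hc1 : c + 1 ≠ 0 := fun h0 => hc (by linear_combination h0)
      field_simp
      ring
    · intro b hb; rfl
  rw [key]
  have : ∑ c ∈ univ.filter (· ≠ (-1:F)), χ c = (∑ c : F, χ c) - χ (-1) := by
    rw [← Finset.sum_filter_add_sum_filter_not univ (· ≠ (-1:F)) (fun c => χ c)]
    simp only [not_ne_iff]
    rw [Finset.filter_eq']
    simp
  rw [this, quadraticChar_sum_zero hF, zero_sub]

include hF in
lemma sum_chi_shift (u : F) :
    ∑ y : F, χ (u - y^2) = if u = 0 then (Fintype.card F - 1) * χ (-1) else -(χ (-1)) := by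
  classical
  have step1 : ∑ y : F, χ (u - y^2) = ∑ b : F, ((univ.filter fun x : F => x^2 = b).card : ℤ) * χ (u - b) := by
    rw [Finset.sum_comp (fun b => χ (u - b)) (fun y : F => y^2)]
    rw [← Finset.sum_subset (Finset.subset_univ (univ.image (fun y : F => y^2)))]
    · apply Finset.sum_congr rfl
      intro b _
      rw [nsmul_eq_mul]
    · intro b _ hb
      have : (univ.filter fun x : F => x^2 = b).card = 0 := by
        rw [Finset.card_eq_zero, Finset.filter_eq_empty_iff]
        intro x _
        intro h
        exact hb (Finset.mem_image.mpr ⟨x, Finset.mem_univ x, h⟩)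
      rw [this, Nat.cast_zero, zero_mul]
  rw [step1]
  have step2 : ∀ b : F, ((univ.filter fun x : F => x^2 = b).card : ℤ) * χ (u - b)
      = χ b * χ (u - b) + χ (u - b) := by
    intro b
    rw [card_sqrts hF b]
    ring
  rw [Finset.sum_congr rfl (fun b _ => step2 b), Finset.sum_add_distrib, sum_sub_eq_zero hF,
    add_zero]
  -- now ∑ b, χ b * χ (u - b)
  have h1 : ∑ b : F, χ b * χ (u - b) = ∑ b ∈ univ.filter (· ≠ (0:F)), χ b * χ (u - b) := by
    rw [eq_comm]
    apply Finset.sum_subset (Finset.filter_subset _ _)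
    intro b _ hb
    simp only [mem_filter, mem_univ, true_and, not_not] at hb
    rw [hb, MulChar.map_zero, zero_mul]
  rw [h1]
  by_cases hu : u = 0
  · subst hu
    simp only [if_pos rfl]
    have : ∀ b ∈ univ.filter (· ≠ (0:F)), χ b * χ (0 - b) = χ (-1) := by
      intro b hb
      simp only [mem_filter, mem_univ, true_and] at hb
      rw [chi_mul_eq 0 b hb, zero_mul, zero_sub]
    rw [Finset.sum_congr rfl this, Finset.sum_const, nsmul_eq_mul]
    congr 1
    rw [Finset.filter_ne', Finset.card_erase_of_mem (mem_univ _), Finset.card_univ]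
    push_cast [Nat.cast_sub (Nat.one_le_iff_ne_zero.mpr Fintype.card_ne_zero)]
    ring
  · rw [if_neg hu, ← sum_chi_mul_ne hF u hu]
    apply Finset.sum_congr rfl
    intro b hb
    simp only [mem_filter, mem_univ, true_and] at hb
    exact chi_mul_eq u b hb

end CharSum


section ModP2
variable {F : Type*} [Field F] [Fintype F] [DecidableEq F] (hF : ringChar F ≠ 2)

local notation "χ" => quadraticChar F

include hF in
lemma card_sol_modp :
    (univ.filter fun t : F × F × F => t.1^2 + t.2.1^2 + t.2.2^2 = 0).card
      = Fintype.card F ^ 2 := by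
  classical
  have key : ((univ.filter fun t : F × F × F => t.1^2 + t.2.1^2 + t.2.2^2 = 0).card : ℤ)
      = ∑ xy : F × F, ((univ.filter fun z : F => z^2 = -(xy.1^2) - xy.2^2).card : ℤ) := by
    rw [← Nat.cast_sum]
    congr 1
    rw [Finset.card_eq_sum_card_fiberwise
      (f := fun t : F × F × F => ((t.1, t.2.1) : F × F)) (t := univ) (fun x _ => mem_univ _)]
    apply Finset.sum_congr rfl
    intro xy _
    apply Finset.card_bij (fun t _ => t.2.2)
    · intro t ht
      simp only [mem_filter, mem_univ, true_and] at ht ⊢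
      obtain ⟨h1, h2⟩ := ht
      rw [Prod.mk.injEq] at h2
      rw [← h2.1, ← h2.2]
      linear_combination h1
    · intro t ht t' ht' h
      simp only [mem_filter, mem_univ, true_and] at ht ht'
      obtain ⟨h1, h2⟩ := ht
      obtain ⟨h1', h2'⟩ := ht'
      rw [Prod.mk.injEq] at h2 h2'
      ext
      · rw [h2.1, h2'.1]
      · rw [h2.2, h2'.2]
      · exact h
    · intro z hz
      simp only [mem_filter, mem_univ, true_and] at hz
      refine ⟨(xy.1, xy.2, z), ?_, rfl⟩
      simp only [mem_filter, mem_univ, true_and]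
      exact ⟨by linear_combination hz, trivial⟩
  have key2 : ∀ xy : F × F, ((univ.filter fun z : F => z^2 = -(xy.1^2) - xy.2^2).card : ℤ)
      = χ (-(xy.1^2) - xy.2^2) + 1 := fun xy => card_sqrts hF _
  rw [Finset.sum_congr rfl (fun xy _ => key2 xy), Finset.sum_add_distrib] at key
  have key3 : ∑ xy : F × F, χ (-(xy.1^2) - xy.2^2) = 0 := by
    rw [Fintype.sum_prod_type]
    have inner : ∀ x : F, ∑ y : F, χ (-(x^2) - y^2)
        = if -(x^2) = (0:F) then (Fintype.card F - 1) * χ (-1) else -(χ (-1)) :=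
      fun x => sum_chi_shift hF (-(x^2))
    rw [Finset.sum_congr rfl (fun x _ => inner x)]
    have hzero : ∀ x : F, (-(x^2) = 0) ↔ (x = 0) := by
      intro x
      rw [neg_eq_zero, pow_eq_zero_iff two_ne_zero]
    rw [← Finset.add_sum_erase univ _ (mem_univ (0:F))]
    rw [if_pos (by simp)]
    have : ∀ x ∈ univ.erase (0:F),
        (if -(x^2) = (0:F) then ((Fintype.card F : ℤ) - 1) * χ (-1) else -(χ (-1))) = -(χ (-1)) := by
      intro x hx
      rw [if_neg]
      rw [hzero]
      exact Finset.ne_of_mem_erase hx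
    rw [Finset.sum_congr rfl this, Finset.sum_const, Finset.card_erase_of_mem (mem_univ _),
      Finset.card_univ, nsmul_eq_mul]
    push_cast [Nat.cast_sub (Nat.one_le_iff_ne_zero.mpr Fintype.card_ne_zero)]
    ring
  rw [key3, zero_add, Finset.sum_const, Finset.card_univ, Fintype.card_prod, nsmul_eq_mul,
    mul_one] at key
  have : ((univ.filter fun t : F × F × F => t.1^2 + t.2.1^2 + t.2.2^2 = 0).card : ℤ)
      = ((Fintype.card F ^ 2 : ℕ) : ℤ) := by
    rw [key]; push_cast; ring
  exact_mod_cast this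

end ModP2


section Local2
variable {p : ℕ} [hp : Fact p.Prime]

local notation "M" => ZMod (p^2)

lemma two_ne_zero_zmod (hp2 : p ≠ 2) : (2 : ZMod p) ≠ 0 := by
  have : ((2:ℕ) : ZMod p) = (2 : ZMod p) := by push_cast; ring
  rw [← this, Ne, ZMod.natCast_eq_zero_iff]
  intro hdvd
  exact hp2 ((Nat.prime_dvd_prime_iff_eq hp.out Nat.prime_two).mp hdvd)

lemma isUnit_of_rho_ne_zero {u : M} (h : rho p u ≠ 0) : IsUnit u := by
  have hnd : ¬ p ∣ u.val := by
    rw [rho_apply] at h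
    intro hd
    exact h (by rwa [ZMod.natCast_eq_zero_iff])
  have hc : (u.val).Coprime (p^2) :=
    Nat.Coprime.pow_right 2 (((Fact.out : p.Prime).coprime_iff_not_dvd.mpr hnd).symm)
  have := (ZMod.isUnit_iff_coprime u.val (p^2)).mpr hc
  rwa [ZMod.natCast_val, ZMod.cast_id] at this

lemma sq_cancel (hp2 : p ≠ 2) {x x' : M} (h0 : rho p x ≠ 0)
    (hxx : rho p x = rho p x') (hsq : x^2 = x'^2) : x = x' := by
  have hu : IsUnit (x + x') := by
    apply isUnit_of_rho_ne_zero
    rw [map_add, ← hxx]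
    have : rho p x + rho p x = 2 * rho p x := by ring
    rw [this]
    exact mul_ne_zero (two_ne_zero_zmod hp2) h0
  have hz : (x + x') * (x - x') = 0 := by linear_combination hsq
  have := (IsUnit.mul_right_eq_zero hu).mp hz
  linear_combination this

def Pi2 (p : ℕ) [Fact p.Prime] (t : ZMod (p^2) × ZMod (p^2) × ZMod (p^2)) : ZMod p × ZMod p × ZMod p :=
  (rho p t.1, rho p t.2.1, rho p t.2.2)

lemma card_fiber2 (a b : ZMod p) :
    (univ.filter fun u : M × M => rho p u.1 = a ∧ rho p u.2 = b).card = p^2 := by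
  classical
  rw [← Fintype.card_subtype, Fintype.card_congr (Equiv.subtypeProdEquivProd
    (p := fun x : M => rho p x = a) (q := fun x : M => rho p x = b)),
    Fintype.card_prod, Fintype.card_subtype, Fintype.card_subtype, card_fiber, card_fiber, sq]

lemma card_fiber3 (s : ZMod p × ZMod p × ZMod p) :
    (univ.filter fun t : M × M × M => Pi2 p t = s).card = p^3 := by
  classical
  have hiff : ∀ t : M × M × M, Pi2 p t = s ↔
      (rho p t.1 = s.1 ∧ (rho p t.2.1 = s.2.1 ∧ rho p t.2.2 = s.2.2)) := by
    intro t
    rw [Pi2, Prod.ext_iff, Prod.ext_iff]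
  rw [Finset.filter_congr (fun t _ => by rw [hiff]), ← Fintype.card_subtype]
  rw [Fintype.card_congr (Equiv.subtypeProdEquivProd
    (p := fun x : M => rho p x = s.1)
    (q := fun u : M × M => rho p u.1 = s.2.1 ∧ rho p u.2 = s.2.2))]
  rw [Fintype.card_prod, Fintype.card_subtype, Fintype.card_subtype, card_fiber, card_fiber2]
  ring
end Local2


section Local3
variable {p : ℕ} [hp : Fact p.Prime]

local notation "M" => ZMod (p^2)

lemma nonzero_fiber_bound (hp2 : p ≠ 2) (s : ZMod p × ZMod p × ZMod p) (hs0 : s ≠ 0) :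
    ((univ.filter fun t : M × M × M => t.1^2 + t.2.1^2 + t.2.2^2 = 0).filter
      fun t => Pi2 p t = s).card ≤ p^2 := by
  classical
  have hmem : ∀ t : M × M × M, t ∈ (univ.filter fun t : M × M × M =>
      t.1^2 + t.2.1^2 + t.2.2^2 = 0).filter (fun t => Pi2 p t = s) →
      (t.1^2 + t.2.1^2 + t.2.2^2 = 0 ∧
        (rho p t.1 = s.1 ∧ rho p t.2.1 = s.2.1 ∧ rho p t.2.2 = s.2.2)) := by
    intro t ht
    simp only [mem_filter, mem_univ, true_and] at ht
    refine ⟨ht.1, ?_⟩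
    have := ht.2
    rw [Pi2, Prod.ext_iff, Prod.ext_iff] at this
    exact ⟨this.1, this.2.1, this.2.2⟩
  have hcases : s.1 ≠ 0 ∨ s.2.1 ≠ 0 ∨ s.2.2 ≠ 0 := by
    by_contra h
    push_neg at h
    exact hs0 (by ext <;> simp [h.1, h.2.1, h.2.2])
  rcases hcases with h1 | h2 | h3
  · refine le_of_le_of_eq (Finset.card_le_card_of_injOn
      (fun t => (t.2.1, t.2.2)) ?_ ?_) (card_fiber2 s.2.1 s.2.2)
    · intro t ht
      obtain ⟨_, hr⟩ := hmem t ht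
      simp only [mem_filter, mem_univ, true_and]
      exact Finset.mem_filter.mpr ⟨Finset.mem_univ _, hr.2.1, hr.2.2⟩
    · intro t ht t' ht' h
      obtain ⟨hQ, hr⟩ := hmem t ht
      obtain ⟨hQ', hr'⟩ := hmem t' ht'
      rw [Prod.mk.injEq] at h
      have hsq : t.1^2 = t'.1^2 := by
        rw [← h.1, ← h.2] at hQ'
        linear_combination hQ - hQ'
      have : t.1 = t'.1 := sq_cancel hp2 (hr.1 ▸ h1) (hr.1.trans hr'.1.symm) hsq
      ext
      · exact this
      · exact h.1
      · exact h.2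
  · refine le_of_le_of_eq (Finset.card_le_card_of_injOn
      (fun t => (t.1, t.2.2)) ?_ ?_) (card_fiber2 s.1 s.2.2)
    · intro t ht
      obtain ⟨_, hr⟩ := hmem t ht
      simp only [mem_filter, mem_univ, true_and]
      exact Finset.mem_filter.mpr ⟨Finset.mem_univ _, hr.1, hr.2.2⟩
    · intro t ht t' ht' h
      obtain ⟨hQ, hr⟩ := hmem t ht
      obtain ⟨hQ', hr'⟩ := hmem t' ht'
      rw [Prod.mk.injEq] at h
      have hsq : t.2.1^2 = t'.2.1^2 := by
        rw [← h.1, ← h.2] at hQ'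
        linear_combination hQ - hQ'
      have : t.2.1 = t'.2.1 := sq_cancel hp2 (hr.2.1 ▸ h2) (hr.2.1.trans hr'.2.1.symm) hsq
      ext
      · exact h.1
      · exact this
      · exact h.2
  · refine le_of_le_of_eq (Finset.card_le_card_of_injOn
      (fun t => (t.1, t.2.1)) ?_ ?_) (card_fiber2 s.1 s.2.1)
    · intro t ht
      obtain ⟨_, hr⟩ := hmem t ht
      simp only [mem_filter, mem_univ, true_and]
      exact Finset.mem_filter.mpr ⟨Finset.mem_univ _, hr.1, hr.2.1⟩
    · intro t ht t' ht' h
      obtain ⟨hQ, hr⟩ := hmem t ht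
      obtain ⟨hQ', hr'⟩ := hmem t' ht'
      rw [Prod.mk.injEq] at h
      have hsq : t.2.2^2 = t'.2.2^2 := by
        rw [← h.1, ← h.2] at hQ'
        linear_combination hQ - hQ'
      have : t.2.2 = t'.2.2 := sq_cancel hp2 (hr.2.2 ▸ h3) (hr.2.2.trans hr'.2.2.symm) hsq
      ext
      · exact h.1
      · exact h.2
      · exact this

lemma vcount_odd_prime (hp2 : p ≠ 2) : vcount p ≤ p^4 + p^3 := by
  classical
  have hchar : ringChar (ZMod p) ≠ 2 := by
    rw [ZMod.ringChar_zmod_n]; exact hp2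
  have hSol1 : (univ.filter fun t : ZMod p × ZMod p × ZMod p =>
      t.1^2 + t.2.1^2 + t.2.2^2 = 0).card = p^2 := by
    rw [card_sol_modp hchar, ZMod.card]
  set Sol1 := univ.filter fun t : ZMod p × ZMod p × ZMod p =>
      t.1^2 + t.2.1^2 + t.2.2^2 = 0 with hSol1def
  set Sol2 := univ.filter fun t : M × M × M => t.1^2 + t.2.1^2 + t.2.2^2 = 0 with hSol2def
  have hv : vcount p = Sol2.card := by
    rw [vcount, Nat.card_eq_fintype_card, Fintype.card_subtype]
  have hmap : ∀ t ∈ Sol2, Pi2 p t ∈ Sol1 := by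
    intro t ht
    simp only [hSol2def, hSol1def, mem_filter, mem_univ, true_and, Pi2] at ht ⊢
    have : rho p (t.1^2 + t.2.1^2 + t.2.2^2) = 0 := by rw [ht, map_zero]
    simpa [map_add, map_pow] using this
  have hzero : ((0,0,0) : ZMod p × ZMod p × ZMod p) ∈ Sol1 := by
    simp [hSol1def]
  rw [hv, Finset.card_eq_sum_card_fiberwise hmap]
  rw [← Finset.add_sum_erase Sol1 _ hzero]
  have hbound0 : (Sol2.filter fun t => Pi2 p t = (0,0,0)).card ≤ p^3 := by
    refine le_of_le_of_eq (Finset.card_le_card ?_) (card_fiber3 ((0,0,0) : ZMod p × ZMod p × ZMod p))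
    intro t ht
    simp only [hSol2def, mem_filter, mem_univ, true_and] at ht ⊢
    exact ht.2
  have hbound : ∀ s ∈ Sol1.erase (0,0,0),
      (Sol2.filter fun t => Pi2 p t = s).card ≤ p^2 := by
    intro s hs
    exact nonzero_fiber_bound hp2 s (Finset.ne_of_mem_erase hs)
  calc (Sol2.filter fun t => Pi2 p t = (0,0,0)).card
        + ∑ s ∈ Sol1.erase (0,0,0), (Sol2.filter fun t => Pi2 p t = s).card
      ≤ p^3 + ∑ s ∈ Sol1.erase (0,0,0), p^2 :=
        Nat.add_le_add hbound0 (Finset.sum_le_sum hbound)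
    _ ≤ p^3 + p^2 * p^2 := by
        rw [Finset.sum_const, smul_eq_mul]
        have : (Sol1.erase (0,0,0)).card ≤ p^2 := by
          calc (Sol1.erase (0,0,0)).card ≤ Sol1.card := Finset.card_erase_le
          _ = p^2 := hSol1
        exact Nat.add_le_add_left (Nat.mul_le_mul_right _ this) _
    _ = p^4 + p^3 := by ring
end Local3


lemma vcount_two : vcount 2 = 8 := by
  rw [vcount, Nat.card_eq_fintype_card, Fintype.card_subtype]
  decide

lemma vcount_prime_le {p : ℕ} (hp : p.Prime) : vcount p ≤ p^4 + p^3 := by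
  haveI : Fact p.Prime := ⟨hp⟩
  rcases eq_or_ne p 2 with rfl | h
  · rw [vcount_two]; norm_num
  · exact vcount_odd_prime h

theorem part1 (d : ℕ) (hd : Squarefree d) :
    (vcount d : ℝ) ≤ (d : ℝ)^4 * ∏ p ∈ d.primeFactors, (1 + 1 / (p : ℝ)) := by
  have hprime : ∀ p ∈ d.primeFactors, p.Prime := fun p hp => Nat.prime_of_mem_primeFactors hp
  have hprod : ∏ p ∈ d.primeFactors, p = d := Nat.prod_primeFactors_of_squarefree hd
  have h1 : vcount d = ∏ p ∈ d.primeFactors, vcount p := by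
    conv_lhs => rw [← hprod]
    exact vcount_prod hprime
  have h2 : (vcount d : ℝ) = ∏ p ∈ d.primeFactors, (vcount p : ℝ) := by
    rw [h1]; push_cast; rfl
  rw [h2]
  have h3 : ∀ p ∈ d.primeFactors, (vcount p : ℝ) ≤ (p:ℝ)^4 * (1 + 1/(p:ℝ)) := by
    intro p hp
    have hpp := hprime p hp
    have hppos : (0:ℝ) < p := by exact_mod_cast hpp.pos
    have := vcount_prime_le hpp
    have hc : (vcount p : ℝ) ≤ (p:ℝ)^4 + (p:ℝ)^3 := by exact_mod_cast this
    refine hc.trans (le_of_eq ?_)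
    field_simp
  calc ∏ p ∈ d.primeFactors, (vcount p : ℝ)
      ≤ ∏ p ∈ d.primeFactors, (p:ℝ)^4 * (1 + 1/(p:ℝ)) := by
        apply Finset.prod_le_prod (fun p _ => by positivity) h3
    _ = (∏ p ∈ d.primeFactors, (p:ℝ))^4 * ∏ p ∈ d.primeFactors, (1 + 1/(p:ℝ)) := by
        rw [Finset.prod_mul_distrib, Finset.prod_pow]
    _ = (d : ℝ)^4 * ∏ p ∈ d.primeFactors, (1 + 1/(p:ℝ)) := by
        congr 2
        rw [← Nat.cast_prod, hprod]


lemma theta_le (n : ℕ) : ∑ p ∈ (n+1).primesBelow, Real.log p ≤ n * Real.log 4 := by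
  have hpos : 0 < primorial n := by
    apply Finset.prod_pos
    intro p hp
    exact (Finset.mem_filter.mp hp).2.pos
  have h1 : Real.log (primorial n) = ∑ p ∈ (n+1).primesBelow, Real.log p := by
    rw [primorial, Nat.cast_prod, Real.log_prod]
    · rfl
    · intro p hp
      exact_mod_cast (Finset.mem_filter.mp hp).2.pos.ne'
  rw [← h1]
  calc Real.log (primorial n) ≤ Real.log ((4:ℝ)^n) := by
        apply Real.log_le_log (by exact_mod_cast hpos)
        exact_mod_cast primorial_le_4_pow n
    _ = n * Real.log 4 := by
        rw [Real.log_pow]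

lemma factorization_factorial_ge (N p : ℕ) (hp : p.Prime) (hpN : p ≤ N) :
    N / p ≤ (N !).factorization p := by
  haveI : Fact p.Prime := ⟨hp⟩
  rw [Nat.factorization_def _ hp, padicValNat_factorial (b := Nat.log p N + 1) (Nat.lt_succ_self _)]
  have h1 : 1 ∈ Finset.Ico 1 (Nat.log p N + 1) := by
    rw [Finset.mem_Ico]
    exact ⟨le_refl 1, by
      have : 0 < Nat.log p N := Nat.log_pos hp.one_lt hpN
      omega⟩
  calc N / p = N / p ^ 1 := by rw [pow_one]
    _ ≤ ∑ i ∈ Finset.Ico 1 (Nat.log p N + 1), N / p ^ i :=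
        Finset.single_le_sum (f := fun i => N / p ^ i) (fun i _ => Nat.zero_le _) h1

lemma mertens1 (N : ℕ) (hN : 1 ≤ N) :
    ∑ p ∈ (N+1).primesBelow, Real.log p / p ≤ Real.log N + 2 * Real.log 4 := by
  have hNpos : (0:ℝ) < N := by exact_mod_cast hN
  have hsub : (N+1).primesBelow ⊆ (N !).primeFactors := by
    intro p hp
    obtain ⟨hlt, hpp⟩ := Nat.mem_primesBelow.mp hp
    exact Nat.mem_primeFactors.mpr ⟨hpp, (Nat.dvd_factorial hpp.pos (Nat.lt_succ_iff.mp hlt)),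
      Nat.factorial_ne_zero N⟩
  have hlog_nonneg : ∀ p : ℕ, (0:ℝ) ≤ Real.log p := fun p => Real.log_natCast_nonneg p
  have hlogfact : Real.log (N !) = ∑ p ∈ (N !).primeFactors, ((N !).factorization p : ℝ) * Real.log p := by
    conv_lhs => rw [← Nat.factorization_prod_pow_eq_self (Nat.factorial_ne_zero N)]
    rw [Finsupp.prod, Nat.cast_prod, Real.log_prod, Nat.support_factorization]
    · apply Finset.sum_congr rfl
      intro p hp
      rw [Nat.cast_pow, Real.log_pow]
    · intro p hp
      have hpp : p.Prime := Nat.prime_of_mem_primeFactors (by rwa [Nat.support_factorization] at hp)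
      have := hpp.pos
      positivity
  have key : ∑ p ∈ (N+1).primesBelow, ((N / p : ℕ) : ℝ) * Real.log p ≤ Real.log (N !) := by
    rw [hlogfact]
    calc ∑ p ∈ (N+1).primesBelow, ((N / p : ℕ) : ℝ) * Real.log p
        ≤ ∑ p ∈ (N+1).primesBelow, ((N !).factorization p : ℝ) * Real.log p := by
          apply Finset.sum_le_sum
          intro p hp
          obtain ⟨hlt, hpp⟩ := Nat.mem_primesBelow.mp hp
          have := factorization_factorial_ge N p hpp (Nat.lt_succ_iff.mp hlt)
          exact mul_le_mul_of_nonneg_right (by exact_mod_cast this) (hlog_nonneg p)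
      _ ≤ ∑ p ∈ (N !).primeFactors, ((N !).factorization p : ℝ) * Real.log p := by
          apply Finset.sum_le_sum_of_subset_of_nonneg hsub
          intro p hp _
          positivity
  have hfact_le : Real.log (N !) ≤ N * Real.log N := by
    calc Real.log (N !) ≤ Real.log ((N:ℝ)^N) := by
          apply Real.log_le_log (by exact_mod_cast Nat.factorial_pos N)
          exact_mod_cast Nat.factorial_le_pow N
      _ = N * Real.log N := by rw [Real.log_pow]
  -- real div vs nat div:  (N:ℝ)/p ≤ (N/p : ℕ) + 1
  have hdiv : ∀ p : ℕ, p.Prime → (N:ℝ)/p * Real.log p ≤ ((N / p : ℕ) : ℝ) * Real.log p + Real.log p := by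
    intro p hpp
    have hppos : (0:ℝ) < p := by exact_mod_cast hpp.pos
    have h1 : (N:ℝ)/p ≤ ((N / p : ℕ) : ℝ) + 1 := by
      rw [div_le_iff₀ hppos]
      have hlt : N < p * (N / p + 1) := by
        rw [Nat.mul_succ]
        have h := Nat.div_add_mod N p
        have h2 := Nat.mod_lt N hpp.pos
        omega
      have : (N : ℝ) ≤ p * (((N / p : ℕ) : ℝ) + 1) := by exact_mod_cast hlt.le
      linarith [this]
    nlinarith [hlog_nonneg p]
  have step : ∑ p ∈ (N+1).primesBelow, (N:ℝ)/p * Real.log p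
      ≤ N * Real.log N + N * Real.log 4 := by
    calc ∑ p ∈ (N+1).primesBelow, (N:ℝ)/p * Real.log p
        ≤ ∑ p ∈ (N+1).primesBelow, (((N / p : ℕ) : ℝ) * Real.log p + Real.log p) := by
          apply Finset.sum_le_sum
          intro p hp
          exact hdiv p (Nat.mem_primesBelow.mp hp).2
      _ = ∑ p ∈ (N+1).primesBelow, ((N / p : ℕ) : ℝ) * Real.log p
          + ∑ p ∈ (N+1).primesBelow, Real.log p := Finset.sum_add_distrib
      _ ≤ N * Real.log N + N * Real.log 4 :=
          add_le_add (key.trans hfact_le) (theta_le N)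
  -- divide by N
  have hfinal : ∑ p ∈ (N+1).primesBelow, Real.log p / p
      = (∑ p ∈ (N+1).primesBelow, (N:ℝ)/p * Real.log p) / N := by
    rw [Finset.sum_div]
    apply Finset.sum_congr rfl
    intro p hp
    have hppos : (0:ℝ) < p := by exact_mod_cast (Nat.mem_primesBelow.mp hp).2.pos
    field_simp
  rw [hfinal]
  rw [div_le_iff₀ hNpos]
  calc ∑ p ∈ (N+1).primesBelow, (N:ℝ)/p * Real.log p
      ≤ N * Real.log N + N * Real.log 4 := step
    _ ≤ (Real.log N + 2 * Real.log 4) * N := by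
        have h4 : (0:ℝ) ≤ Real.log 4 := Real.log_nonneg (by norm_num)
        nlinarith


lemma sum_logdiv_nonneg (m : ℕ) : 0 ≤ ∑ p ∈ m.primesBelow, Real.log p / p := by
  apply Finset.sum_nonneg
  intro p hp
  have h1 : (0:ℝ) ≤ Real.log p := Real.log_natCast_nonneg p
  positivity

lemma primesBelow_mono {m n : ℕ} (h : m ≤ n) : m.primesBelow ⊆ n.primesBelow := by
  intro p hp
  rw [Nat.mem_primesBelow] at hp ⊢
  exact ⟨lt_of_lt_of_le hp.1 h, hp.2⟩

lemma mertens2_pow (j : ℕ) :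
    ∑ p ∈ ((2^(j+1)+1 : ℕ)).primesBelow, (1:ℝ)/p
      ≤ 5 + (harmonic j : ℝ)
        + (∑ p ∈ ((2^(j+1)+1 : ℕ)).primesBelow, Real.log p / p)/(((j:ℝ)+1) * Real.log 2)
        - 4/((j:ℝ)+1) := by
  have L0 : (0:ℝ) < Real.log 2 := Real.log_pos (by norm_num)
  induction j with
  | zero =>
    have hpb : ((2^(0+1)+1 : ℕ)).primesBelow = {2} := by decide
    rw [hpb]
    have ht : 0 ≤ ∑ p ∈ ({2} : Finset ℕ), Real.log p / p := by
      rw [← hpb]; exact sum_logdiv_nonneg _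
    have hsum : ∑ p ∈ ({2} : Finset ℕ), (1:ℝ)/p = 1/2 := by norm_num
    rw [hsum]
    have hd : 0 ≤ (∑ p ∈ ({2} : Finset ℕ), Real.log p / p) / (((0:ℝ)+1) * Real.log 2) := by
      positivity
    simp only [harmonic_zero, Rat.cast_zero, Nat.cast_zero]
    linarith
  | succ j ih =>
    have hj0 : (0:ℝ) ≤ (j:ℝ) := Nat.cast_nonneg j
    have ha0 : (0:ℝ) < (j:ℝ)+1 := by linarith
    have ha10 : (0:ℝ) < (j:ℝ)+2 := by linarith
    set A := ((2^(j+1)+1 : ℕ)).primesBelow with hA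
    set B := ((2^(j+1+1)+1 : ℕ)).primesBelow with hB
    have hAB : A ⊆ B := _root_.primesBelow_mono (by gcongr <;> norm_num)
    set tA := ∑ p ∈ A, Real.log p / (p:ℝ) with htA
    set tB := ∑ p ∈ B, Real.log p / (p:ℝ) with htB
    have block : ∑ p ∈ B \ A, (1:ℝ)/p ≤ (tB - tA) / (((j:ℝ)+1) * Real.log 2) := by
      have hterm : ∀ p ∈ B \ A, (1:ℝ)/p ≤ (Real.log p / p) / (((j:ℝ)+1) * Real.log 2) := by
        intro p hp
        rw [Finset.mem_sdiff] at hp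
        obtain ⟨hpB, hpA⟩ := hp
        have hpp : p.Prime := (Nat.mem_primesBelow.mp hpB).2
        have hplt : ¬ (p < 2^(j+1)+1) := fun h => hpA (Nat.mem_primesBelow.mpr ⟨h, hpp⟩)
        have hpge : (2:ℕ)^(j+1) < p := by omega
        have hppos : (0:ℝ) < p := by exact_mod_cast hpp.pos
        have hlogp : ((j:ℝ)+1) * Real.log 2 < Real.log p := by
          have h4 : Real.log ((2:ℝ)^(j+1)) < Real.log p :=
            Real.log_lt_log (by positivity) (by exact_mod_cast hpge)
          rw [Real.log_pow] at h4
          push_cast at h4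
          linarith
        rw [div_div, div_le_div_iff₀ hppos (by positivity)]
        calc 1 * (p * (((j:ℝ)+1) * Real.log 2)) = p * (((j:ℝ)+1) * Real.log 2) := by ring
          _ ≤ p * Real.log p := mul_le_mul_of_nonneg_left hlogp.le (by positivity)
          _ = Real.log p * p := by ring
      calc ∑ p ∈ B \ A, (1:ℝ)/p
          ≤ ∑ p ∈ B \ A, (Real.log p / p) / (((j:ℝ)+1) * Real.log 2) :=
            Finset.sum_le_sum hterm
        _ = (∑ p ∈ B \ A, Real.log p / (p:ℝ)) / (((j:ℝ)+1) * Real.log 2) := by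
            rw [Finset.sum_div]
        _ = (tB - tA) / (((j:ℝ)+1) * Real.log 2) := by
            rw [htB, htA, Finset.sum_sdiff_eq_sub hAB]
    have hsplit : ∑ p ∈ B, (1:ℝ)/p = ∑ p ∈ A, (1:ℝ)/p + ∑ p ∈ B \ A, (1:ℝ)/p := by
      rw [Finset.sum_sdiff_eq_sub hAB]
      ring
    have htB_le : tB ≤ ((j:ℝ)+2) * Real.log 2 + 4 * Real.log 2 := by
      have h := mertens1 (2^(j+1+1)) Nat.one_le_two_pow
      rw [← hB] at h
      have hlog4 : Real.log 4 = 2 * Real.log 2 := by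
        rw [show (4:ℝ) = 2^2 by norm_num, Real.log_pow]
        push_cast; ring
      have hlogpow : Real.log (((2^(j+1+1) : ℕ)) : ℝ) = ((j:ℝ)+2) * Real.log 2 := by
        push_cast
        rw [Real.log_pow]
        push_cast
        ring
      calc tB ≤ Real.log (((2^(j+1+1) : ℕ)) : ℝ) + 2 * Real.log 4 := h
        _ = ((j:ℝ)+2) * Real.log 2 + 4 * Real.log 2 := by rw [hlogpow, hlog4]; ring
    have htB_nonneg : 0 ≤ tB := by rw [htB, hB]; exact sum_logdiv_nonneg _
    have key : tB/(((j:ℝ)+1) * Real.log 2) - 4/((j:ℝ)+1)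
        ≤ 1/((j:ℝ)+1) + tB/(((j:ℝ)+2) * Real.log 2) - 4/((j:ℝ)+2) := by
      have hdiff : tB/(((j:ℝ)+1) * Real.log 2) - tB/(((j:ℝ)+2) * Real.log 2)
          = tB/(((j:ℝ)+1)*((j:ℝ)+2)*Real.log 2) := by
        field_simp
        ring
      have hb1 : tB/(((j:ℝ)+1)*((j:ℝ)+2)*Real.log 2)
          ≤ (((j:ℝ)+2)*Real.log 2 + 4*Real.log 2)/(((j:ℝ)+1)*((j:ℝ)+2)*Real.log 2) := by
        gcongr
      have hb2 : (((j:ℝ)+2)*Real.log 2 + 4*Real.log 2)/(((j:ℝ)+1)*((j:ℝ)+2)*Real.log 2)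
          = 1/((j:ℝ)+1) + 4/((j:ℝ)+1) - 4/((j:ℝ)+2) := by
        field_simp
        ring
      rw [hb2] at hb1
      linarith
    have hharm : (harmonic (j+1) : ℝ) = (harmonic j : ℝ) + 1/((j:ℝ)+1) := by
      rw [harmonic_succ]
      push_cast
      ring
    have goal2 : ∑ p ∈ B, (1:ℝ)/p
        ≤ 5 + (harmonic (j+1) : ℝ) + tB/(((j:ℝ)+2) * Real.log 2) - 4/((j:ℝ)+2) := by
      calc ∑ p ∈ B, (1:ℝ)/p = ∑ p ∈ A, (1:ℝ)/p + ∑ p ∈ B \ A, (1:ℝ)/p := hsplit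
        _ ≤ (5 + (harmonic j : ℝ) + tA/(((j:ℝ)+1) * Real.log 2) - 4/((j:ℝ)+1))
            + (tB - tA)/(((j:ℝ)+1) * Real.log 2) := add_le_add ih block
        _ = 5 + (harmonic j : ℝ) + tB/(((j:ℝ)+1) * Real.log 2) - 4/((j:ℝ)+1) := by
            field_simp
            ring
        _ ≤ 5 + (harmonic j : ℝ)
            + (1/((j:ℝ)+1) + tB/(((j:ℝ)+2) * Real.log 2) - 4/((j:ℝ)+2)) := by linarith
        _ = 5 + (harmonic (j+1) : ℝ) + tB/(((j:ℝ)+2) * Real.log 2) - 4/((j:ℝ)+2) := by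
            rw [hharm]; ring
    have hidx : ((j:ℝ)+2) = (((j+1:ℕ):ℝ)+1) := by push_cast; ring
    rw [← hB] at *
    calc ∑ p ∈ B, (1:ℝ)/p
        ≤ 5 + (harmonic (j+1) : ℝ) + tB/(((j:ℝ)+2) * Real.log 2) - 4/((j:ℝ)+2) := goal2
      _ = 5 + (harmonic (j+1) : ℝ) + tB/((((j+1:ℕ):ℝ)+1) * Real.log 2) - 4/(((j+1:ℕ):ℝ)+1) := by
          rw [hidx]


lemma mertens2_final {n : ℕ} (hn : 2 ≤ n) :
    ∑ p ∈ ((n+1:ℕ)).primesBelow, (1:ℝ)/p ≤ 12 + Real.log (Real.log n) := by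
  have L0 : (0:ℝ) < Real.log 2 := Real.log_pos (by norm_num)
  have Lgt : (0.6931471803:ℝ) < Real.log 2 := Real.log_two_gt_d9
  set j := Nat.log 2 n with hj
  have hj1 : 1 ≤ j := Nat.log_pos one_lt_two hn
  have hnlt : n < 2^(j+1) := Nat.lt_pow_succ_log_self one_lt_two n
  have hsub : ((n+1:ℕ)).primesBelow ⊆ ((2^(j+1)+1 : ℕ)).primesBelow :=
    _root_.primesBelow_mono (by omega)
  have hmono : ∑ p ∈ ((n+1:ℕ)).primesBelow, (1:ℝ)/p
      ≤ ∑ p ∈ ((2^(j+1)+1 : ℕ)).primesBelow, (1:ℝ)/p := by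
    apply Finset.sum_le_sum_of_subset_of_nonneg hsub
    intro p hp _
    positivity
  have hm2 := mertens2_pow j
  have hjpos : (0:ℝ) < (j:ℝ) := by exact_mod_cast hj1
  have hj1R : (1:ℝ) ≤ (j:ℝ)+1 := by linarith
  -- t bound
  have ht_le : ∑ p ∈ ((2^(j+1)+1 : ℕ)).primesBelow, Real.log p / p
      ≤ ((j:ℝ)+1) * Real.log 2 + 4 * Real.log 2 := by
    have h := mertens1 (2^(j+1)) Nat.one_le_two_pow
    have hlog4 : Real.log 4 = 2 * Real.log 2 := by
      rw [show (4:ℝ) = 2^2 by norm_num, Real.log_pow]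
      push_cast; ring
    have hlogpow : Real.log (((2^(j+1) : ℕ)) : ℝ) = ((j:ℝ)+1) * Real.log 2 := by
      push_cast
      rw [Real.log_pow]
      push_cast
      ring
    calc ∑ p ∈ ((2^(j+1)+1 : ℕ)).primesBelow, Real.log p / p
        ≤ Real.log (((2^(j+1) : ℕ)) : ℝ) + 2 * Real.log 4 := h
      _ = ((j:ℝ)+1) * Real.log 2 + 4 * Real.log 2 := by rw [hlogpow, hlog4]; ring
  have ht_nonneg : 0 ≤ ∑ p ∈ ((2^(j+1)+1 : ℕ)).primesBelow, Real.log p / p := by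
    apply Finset.sum_nonneg
    intro p hp
    have := Real.log_natCast_nonneg p
    positivity
  have hquot : (∑ p ∈ ((2^(j+1)+1 : ℕ)).primesBelow, Real.log p / p)/(((j:ℝ)+1) * Real.log 2)
      ≤ 1 + 4/((j:ℝ)+1) := by
    rw [div_le_iff₀ (by positivity)]
    calc ∑ p ∈ ((2^(j+1)+1 : ℕ)).primesBelow, Real.log p / p
        ≤ ((j:ℝ)+1) * Real.log 2 + 4 * Real.log 2 := ht_le
      _ = (1 + 4/((j:ℝ)+1)) * (((j:ℝ)+1) * Real.log 2) := by
          field_simp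
  have hharm : (harmonic j : ℝ) ≤ 1 + Real.log j := harmonic_le_one_add_log j
  -- log j ≤ log log n + 1/2
  have h2j : (2:ℝ)^(j:ℕ) ≤ n := by exact_mod_cast Nat.pow_log_le_self 2 (by omega)
  have hjle : (j:ℝ) * Real.log 2 ≤ Real.log n := by
    have hlp : Real.log ((2:ℝ)^(j:ℕ)) = (j:ℝ) * Real.log 2 := by rw [Real.log_pow]
    calc (j:ℝ) * Real.log 2 = Real.log ((2:ℝ)^(j:ℕ)) := hlp.symm
      _ ≤ Real.log n := Real.log_le_log (by positivity) h2j
  have hlogn_pos : (0:ℝ) < Real.log n := by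
    apply Real.log_pos
    exact_mod_cast by omega
  have hjlog : Real.log j ≤ Real.log (Real.log n) + 1/2 := by
    have hjb : (j:ℝ) ≤ Real.log n * (1/Real.log 2) := by
      have h' : (j:ℝ) ≤ Real.log n / Real.log 2 := (le_div_iff₀ L0).mpr hjle
      calc (j:ℝ) ≤ Real.log n / Real.log 2 := h'
        _ = Real.log n * (1/Real.log 2) := by ring
    calc Real.log j ≤ Real.log (Real.log n * (1/Real.log 2)) :=
          Real.log_le_log hjpos hjb
      _ = Real.log (Real.log n) + Real.log (1/Real.log 2) := by
          rw [Real.log_mul hlogn_pos.ne' (by positivity)]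
      _ ≤ Real.log (Real.log n) + 1/2 := by
          have h1 : Real.log (1/Real.log 2) ≤ 1/Real.log 2 - 1 :=
            Real.log_le_sub_one_of_pos (by positivity)
          have h2 : 1/Real.log 2 ≤ 1.5 := by
            rw [div_le_iff₀ L0]
            linarith
          linarith
  have h4 : 4/((j:ℝ)+1) ≤ 4 := by
    rw [div_le_iff₀ (by positivity)]
    linarith
  calc ∑ p ∈ ((n+1:ℕ)).primesBelow, (1:ℝ)/p
      ≤ ∑ p ∈ ((2^(j+1)+1 : ℕ)).primesBelow, (1:ℝ)/p := hmono
    _ ≤ 5 + (harmonic j : ℝ)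
        + (∑ p ∈ ((2^(j+1)+1 : ℕ)).primesBelow, Real.log p / p)/(((j:ℝ)+1) * Real.log 2)
        - 4/((j:ℝ)+1) := hm2
    _ ≤ 5 + (1 + Real.log j) + (1 + 4/((j:ℝ)+1)) - 4/((j:ℝ)+1) := by linarith
    _ = 7 + Real.log j := by ring
    _ ≤ 7 + (Real.log (Real.log n) + 1/2) := by linarith
    _ ≤ 12 + Real.log (Real.log n) := by linarith

lemma prod_primesBelow_le {n : ℕ} (hn : 2 ≤ n) :
    ∏ p ∈ ((n+1:ℕ)).primesBelow, (1 + (1:ℝ)/p)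
      ≤ Real.exp 12 * Real.log n := by
  have hlogn_pos : (0:ℝ) < Real.log n := Real.log_pos (by exact_mod_cast by omega)
  calc ∏ p ∈ ((n+1:ℕ)).primesBelow, (1 + (1:ℝ)/p)
      ≤ ∏ p ∈ ((n+1:ℕ)).primesBelow, Real.exp ((1:ℝ)/p) := by
        apply Finset.prod_le_prod
        · intro p hp; positivity
        · intro p hp
          have := Real.add_one_le_exp ((1:ℝ)/p)
          linarith
    _ = Real.exp (∑ p ∈ ((n+1:ℕ)).primesBelow, (1:ℝ)/p) := (Real.exp_sum _ _).symm
    _ ≤ Real.exp (12 + Real.log (Real.log n)) := by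
        apply Real.exp_le_exp.mpr
        exact mertens2_final hn
    _ = Real.exp 12 * Real.log n := by
        rw [Real.exp_add, Real.exp_log hlogn_pos]


lemma prod_primeFactors_le {d : ℕ} (hd : Squarefree d) (h3 : 3 ≤ d) :
    ∏ p ∈ d.primeFactors, (1 + (1:ℝ)/p) ≤ (18 * Real.exp 13) * Real.log (Real.log d) := by
  have L0 : (0:ℝ) < Real.log 2 := Real.log_pos (by norm_num)
  have Lgt : (0.6931471803:ℝ) < Real.log 2 := Real.log_two_gt_d9
  set k := d.primeFactors.card with hk
  have hk1 : 1 ≤ k := by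
    rw [hk]
    apply Finset.card_pos.mpr
    exact Nat.nonempty_primeFactors.mpr (by omega)
  set K := k + 2 with hK
  have hK2 : 2 ≤ K := by omega
  -- split the product
  have hsplit := Finset.prod_filter_mul_prod_filter_not d.primeFactors (fun p => p ≤ K)
    (fun p => 1 + (1:ℝ)/p)
  -- small primes
  have hsmall : ∏ p ∈ d.primeFactors.filter (fun p => p ≤ K), (1 + (1:ℝ)/p)
      ≤ Real.exp 12 * Real.log K := by
    calc ∏ p ∈ d.primeFactors.filter (fun p => p ≤ K), (1 + (1:ℝ)/p)
        ≤ ∏ p ∈ ((K+1:ℕ)).primesBelow, (1 + (1:ℝ)/p) := by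
          have hsub : d.primeFactors.filter (fun p => p ≤ K) ⊆ ((K+1:ℕ)).primesBelow := by
            intro p hp
            rw [Finset.mem_filter] at hp
            exact Nat.mem_primesBelow.mpr ⟨by omega, Nat.prime_of_mem_primeFactors hp.1⟩
          rw [← Finset.prod_sdiff hsub]
          have hone : (1:ℝ) ≤ ∏ p ∈ ((K+1:ℕ)).primesBelow \ d.primeFactors.filter (fun p => p ≤ K),
              (1 + (1:ℝ)/p) := by
            have h1 : (∏ _p ∈ ((K+1:ℕ)).primesBelow \ d.primeFactors.filter (fun p => p ≤ K),
                (1:ℝ)) ≤ ∏ p ∈ ((K+1:ℕ)).primesBelow \ d.primeFactors.filter (fun p => p ≤ K),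
                (1 + (1:ℝ)/p) := by
              apply Finset.prod_le_prod
              · intro p _; norm_num
              · intro p _
                have : (0:ℝ) ≤ 1/p := by positivity
                linarith
            simpa using h1
          have hpos : (0:ℝ) ≤ ∏ p ∈ d.primeFactors.filter (fun p => p ≤ K), (1 + (1:ℝ)/p) :=
            Finset.prod_nonneg (fun p _ => by positivity)
          exact le_mul_of_one_le_left hpos hone
      _ ≤ Real.exp 12 * Real.log K := prod_primesBelow_le hK2
  -- large primes
  have hlarge : ∏ p ∈ d.primeFactors.filter (fun p => ¬ p ≤ K), (1 + (1:ℝ)/p)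
      ≤ Real.exp 1 := by
    have hKpos : (0:ℝ) < K := by positivity
    calc ∏ p ∈ d.primeFactors.filter (fun p => ¬ p ≤ K), (1 + (1:ℝ)/p)
        ≤ ∏ p ∈ d.primeFactors.filter (fun p => ¬ p ≤ K), Real.exp ((1:ℝ)/K) := by
          apply Finset.prod_le_prod
          · intro p hp; positivity
          · intro p hp
            rw [Finset.mem_filter] at hp
            have hpK : (K:ℝ) ≤ p := by exact_mod_cast (by omega : K ≤ p)
            have h1 : (1:ℝ)/p ≤ 1/K := by
              apply one_div_le_one_div_of_le hKpos hpK
            have h2 := Real.add_one_le_exp ((1:ℝ)/p)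
            have h3 := Real.exp_le_exp.mpr h1
            linarith
      _ = Real.exp ((d.primeFactors.filter (fun p => ¬ p ≤ K)).card * ((1:ℝ)/K)) := by
          rw [Finset.prod_const, ← Real.exp_nat_mul]
      _ ≤ Real.exp 1 := by
          apply Real.exp_le_exp.mpr
          have hcard : (d.primeFactors.filter (fun p => ¬ p ≤ K)).card ≤ k :=
            le_trans (Finset.card_filter_le _ _) (le_of_eq hk.symm)
          have : ((d.primeFactors.filter (fun p => ¬ p ≤ K)).card : ℝ) ≤ K := by
            have : ((d.primeFactors.filter (fun p => ¬ p ≤ K)).card : ℝ) ≤ (k:ℝ) := by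
              exact_mod_cast hcard
            have hkK : (k:ℝ) ≤ K := by exact_mod_cast (by omega : k ≤ K)
            linarith
          rw [mul_one_div, div_le_one hKpos]
          exact this
  -- k is small: 2^k ≤ d
  have h2k : (2:ℝ)^k ≤ d := by
    have hnat : 2^k ≤ d := by
      calc 2^k = ∏ _p ∈ d.primeFactors, 2 := by rw [Finset.prod_const, hk]
        _ ≤ ∏ p ∈ d.primeFactors, p := Finset.prod_le_prod' (fun p hp =>
            (Nat.prime_of_mem_primeFactors hp).two_le)
        _ = d := Nat.prod_primeFactors_of_squarefree hd
    exact_mod_cast hnat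
  have hlogd1 : (1.09:ℝ) ≤ Real.log d := by
    have e109 : Real.exp 1.09 ≤ 3 := by
      have h9 : Real.exp (0.09:ℝ) ≤ 1/0.91 := by
        have h := Real.add_one_le_exp (-0.09:ℝ)
        have hpos : (0:ℝ) < Real.exp (-0.09) := Real.exp_pos _
        rw [Real.exp_neg] at h hpos
        have h91 : (0.91:ℝ) ≤ (Real.exp 0.09)⁻¹ := by norm_num at h ⊢; linarith
        have := Real.exp_pos (0.09:ℝ)
        rw [le_inv_comm₀ (by norm_num) this] at h91
        linarith [h91]
      have he1 : Real.exp 1 < 2.7182818286 := Real.exp_one_lt_d9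
      have hsplit109 : Real.exp (1.09:ℝ) = Real.exp 1 * Real.exp 0.09 := by
        rw [← Real.exp_add]; norm_num
      rw [hsplit109]
      have hepos := (Real.exp_pos (0.09:ℝ)).le
      calc Real.exp 1 * Real.exp 0.09 ≤ 2.7182818286 * (1/0.91) := by
            apply mul_le_mul he1.le h9 (Real.exp_pos _).le (by norm_num)
        _ ≤ 3 := by norm_num
    have h3R : (3:ℝ) ≤ d := by exact_mod_cast h3
    calc (1.09:ℝ) ≤ Real.log 3 := (Real.le_log_iff_exp_le (by norm_num)).mpr e109
      _ ≤ Real.log d := Real.log_le_log (by norm_num) h3R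
  have hlogd_pos : (0:ℝ) < Real.log d := by linarith
  have hloglog : Real.log 1.09 ≤ Real.log (Real.log d) :=
    Real.log_le_log (by norm_num) hlogd1
  have hloglog_pos : (0:ℝ) < Real.log (Real.log d) := by
    have : (0:ℝ) < Real.log 1.09 := Real.log_pos (by norm_num)
    linarith
  -- log K ≤ log 4 + log log d
  have hkled : (k:ℝ) * Real.log 2 ≤ Real.log d := by
    have : Real.log ((2:ℝ)^k) ≤ Real.log d := Real.log_le_log (by positivity) h2k
    rwa [Real.log_pow] at this
  have hKled : (K:ℝ) ≤ 4 * Real.log d := by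
    have hkR : (k:ℝ) ≤ Real.log d / Real.log 2 := (le_div_iff₀ L0).mpr hkled
    have h1 : Real.log d / Real.log 2 ≤ 2 * Real.log d := by
      rw [div_le_iff₀ L0]
      nlinarith
    have h2 : (2:ℝ) ≤ 2 * Real.log d := by linarith
    have : (K:ℝ) = (k:ℝ) + 2 := by rw [hK]; push_cast; ring
    linarith
  have hlogK : Real.log K ≤ Real.log 4 + Real.log (Real.log d) := by
    calc Real.log K ≤ Real.log (4 * Real.log d) :=
          Real.log_le_log (by positivity) hKled
      _ = Real.log 4 + Real.log (Real.log d) := Real.log_mul (by norm_num) hlogd_pos.ne'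
  have hlog4_17 : Real.log 4 ≤ 17 * Real.log (Real.log d) := by
    have h17 : Real.log 4 ≤ 17 * Real.log 1.09 := by
      have : (17:ℝ) * Real.log 1.09 = Real.log ((1.09:ℝ)^(17:ℕ)) := by
        rw [Real.log_pow]; push_cast; ring
      rw [this]
      apply Real.log_le_log (by norm_num)
      norm_num
    nlinarith [hloglog]
  have hlogK18 : Real.log K ≤ 18 * Real.log (Real.log d) := by linarith
  -- put it together
  rw [← hsplit]
  have hKlog_nonneg : (0:ℝ) ≤ Real.log K := Real.log_natCast_nonneg K
  calc (∏ p ∈ d.primeFactors.filter (fun p => p ≤ K), (1 + (1:ℝ)/p))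
        * ∏ p ∈ d.primeFactors.filter (fun p => ¬ p ≤ K), (1 + (1:ℝ)/p)
      ≤ (Real.exp 12 * Real.log K) * Real.exp 1 := by
        apply mul_le_mul hsmall hlarge (Finset.prod_nonneg (fun p _ => by positivity))
          (by positivity)
    _ = Real.exp 13 * Real.log K := by
        rw [show (13:ℝ) = 12 + 1 by norm_num, Real.exp_add]
        ring
    _ ≤ Real.exp 13 * (18 * Real.log (Real.log d)) := by
        apply mul_le_mul_of_nonneg_left hlogK18 (Real.exp_pos 13).le
    _ = (18 * Real.exp 13) * Real.log (Real.log d) := by ring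

theorem vcount_upper_bound :
    (∀ d : ℕ, Squarefree d →
      (vcount d : ℝ) ≤ (d : ℝ)^4 * ∏ p ∈ d.primeFactors, (1 + 1 / (p : ℝ))) ∧
    (∃ C > (0:ℝ), ∀ d : ℕ, Squarefree d → 3 ≤ d →
      (vcount d : ℝ) ≤ C * (d : ℝ)^4 * Real.log (Real.log d)) := by
  constructor
  · exact part1
  · refine ⟨18 * Real.exp 13, by positivity, ?_⟩
    intro d hd h3
    have h1 := part1 d hd
    have h2 := prod_primeFactors_le hd h3
    have hd4 : (0:ℝ) ≤ (d:ℝ)^4 := by positivity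
    calc (vcount d : ℝ) ≤ (d : ℝ)^4 * ∏ p ∈ d.primeFactors, (1 + 1 / (p : ℝ)) := h1
      _ ≤ (d : ℝ)^4 * ((18 * Real.exp 13) * Real.log (Real.log d)) :=
          mul_le_mul_of_nonneg_left h2 hd4
      _ = (18 * Real.exp 13) * (d : ℝ)^4 * Real.log (Real.log d) := by ring
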